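/- Suppose ψ > 0 and the true value is θ* = 0. Let θ̂_r^{(n)} | θ* ~ N(0, σ²/n). Then BF_{SM:A}(θ̂_r^{(n)}; ψ, h) = ψ BF_R^{(n)} + (1−ψ) BF_{S:A}(θ̂_r^{(n)}; h) converges to ∞ in probability as n → ∞, since BF_R^{(n)} → ∞ in probability and BF_{S:A}(θ̂_r^{(n)}; h) converges in probability to a finite constant. -/

import Mathlib

open MeasureTheory ProbabilityTheory Filter Real Topology

noncomputable def nd (x μ τ2 : ℝ) : ℝ :=
  (Real.sqrt (2 * Real.pi * τ2))⁻¹ * Real.exp (-(x - μ) ^ 2 / (2 * τ2))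

noncomputable def G1 (u : ℝ) : ℝ :=
  ((gaussianReal 0 1) {x | x ^ 2 ≤ u}).toReal

/-!
Under the null, `θ̂ ~ N(0, σ²/n)` falls with probability at least `1 - ε` into the band
`θ̂² ≤ K σ²/n`, where `K` depends only on `ε` (scale invariance of the Gaussian). On that band
the null density is at least `e^{-K/2} / √(2πσ²/n)`, while the alternative density never exceeds
`1 / √(2πσₒ²)`, so `BF_R ≥ c_K √n`. The skeptical term is nonnegative, hence for large `n` the
event `{BF_{SM:A} ≤ M}` lies outside the band.
-/

lemma nd_nonneg (x μ τ2 : ℝ) : 0 ≤ nd x μ τ2 := by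
  unfold nd; positivity

lemma nd_pos (x μ : ℝ) {τ2 : ℝ} (hτ : 0 < τ2) : 0 < nd x μ τ2 := by
  unfold nd; positivity

lemma nd_le_inv_sqrt (x μ : ℝ) {s τ2 : ℝ} (hs : 0 < s) (hsτ : s ≤ τ2) :
    nd x μ τ2 ≤ (√(2 * π * s))⁻¹ := by
  have hexp : exp (-(x - μ) ^ 2 / (2 * τ2)) ≤ 1 := by
    rw [exp_le_one_iff]
    exact div_nonpos_of_nonpos_of_nonneg (by nlinarith [sq_nonneg (x - μ)]) (by linarith)
  calc nd x μ τ2 ≤ (√(2 * π * τ2))⁻¹ := mul_le_of_le_one_right (by positivity) hexp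
    _ ≤ (√(2 * π * s))⁻¹ := by gcongr

lemma inv_sqrt_mul_exp_le_nd_zero {x v K : ℝ} (hv : 0 < v) (hx : x ^ 2 ≤ K * v) :
    (√(2 * π * v))⁻¹ * exp (-K / 2) ≤ nd x 0 v := by
  refine mul_le_mul_of_nonneg_left (exp_le_exp.2 ?_) (by positivity)
  rw [sub_zero, div_le_div_iff₀ two_pos (by positivity)]
  nlinarith

lemma div_sqrt_mul_exp_le_nd_zero_div_nd {x μ s v K : ℝ} (hs : 0 < s) (hv : 0 < v)
    (hx : x ^ 2 ≤ K * v) :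
    √(2 * π * s) * exp (-K / 2) / √(2 * π * v) ≤ nd x 0 v / nd x μ (s + v) := by
  have hlower := inv_sqrt_mul_exp_le_nd_zero hv hx
  have hupper := nd_le_inv_sqrt x μ hs (le_add_of_nonneg_right hv.le)
  calc √(2 * π * s) * exp (-K / 2) / √(2 * π * v)
      = (√(2 * π * v))⁻¹ * exp (-K / 2) / (√(2 * π * s))⁻¹ := by
        rw [div_inv_eq_mul]; ring
    _ ≤ nd x 0 v / nd x μ (s + v) :=
        div_le_div₀ (nd_nonneg _ _ _) hlower (nd_pos _ _ (by positivity)) hupper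

lemma setOf_mixture_le_subset_setOf_lt_sq {μ s v t ψ K M : ℝ} (hs : 0 < s) (hv : 0 < v)
    (hψ : 0 ≤ ψ) (hψ1 : ψ ≤ 1) (hM : M < ψ * √(2 * π * s) * exp (-K / 2) / √(2 * π * v)) :
    {x | ψ * (nd x 0 v / nd x μ (s + v)) + (1 - ψ) * (nd x 0 t / nd x μ (s + v)) ≤ M} ⊆
      {x | K * v < x ^ 2} := by
  intro x hx
  change K * v < x ^ 2
  by_contra! hx_central
  have hnull := mul_le_mul_of_nonneg_left
    (div_sqrt_mul_exp_le_nd_zero_div_nd (μ := μ) hs hv hx_central) hψ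
  have halt : 0 ≤ (1 - ψ) * (nd x 0 t / nd x μ (s + v)) :=
    mul_nonneg (by linarith) (div_nonneg (nd_nonneg _ _ _) (nd_nonneg _ _ _))
  simp only [Set.mem_ofPred_eq, mul_div_assoc] at hx hM hnull
  linarith

lemma gaussianReal_zero_eq_map_sqrt_mul (v : NNReal) :
    gaussianReal 0 v = (gaussianReal 0 1).map (√v * ·) := by
  rw [gaussianReal_map_const_mul, mul_zero, mul_one]
  congr
  ext
  simp

lemma gaussianReal_zero_setOf_mul_lt_sq {v : NNReal} (hv : v ≠ 0) (K : ℝ) :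
    gaussianReal 0 v {x | K * v < x ^ 2} = gaussianReal 0 1 {x | K < x ^ 2} := by
  have hv' : (0 : ℝ) < v := by positivity
  rw [gaussianReal_zero_eq_map_sqrt_mul,
    Measure.map_apply (measurable_const_mul _) (measurableSet_lt measurable_const (by fun_prop))]
  congr 1
  ext x
  simp only [Set.mem_preimage, Set.mem_ofPred_eq, mul_pow, sq_sqrt hv'.le, mul_comm K]
  exact mul_lt_mul_iff_right₀ hv'

lemma tendsto_measure_setOf_natCast_lt {α : Type*} [MeasurableSpace α] (μ : Measure α)
    [IsFiniteMeasure μ] {f : α → ℝ} (hf : Measurable f) :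
    Tendsto (fun K : ℕ => μ {x | (K : ℝ) < f x}) atTop (𝓝 0) := by
  have hempty : ⋂ K : ℕ, {x | (K : ℝ) < f x} = ∅ :=
    Set.iInter_eq_empty_iff.2 fun x => (exists_nat_ge (f x)).imp fun _ => not_lt.2
  simpa [hempty, Function.comp_def] using tendsto_measure_iInter_atTop (μ := μ)
    (fun K => (measurableSet_lt measurable_const hf).nullMeasurableSet)
    (fun _ _ hKL => Set.ofPred_subset_ofPred.2 fun _ => (Nat.cast_le.2 hKL).trans_lt)
    ⟨0, measure_ne_top _ _⟩

lemma tendsto_div_sqrt_div_natCast_atTop {c a : ℝ} (hc : 0 < c) (ha : 0 < a) :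
    Tendsto (fun n : ℕ => c / √(a / n)) atTop atTop := by
  have hsqrt : Tendsto (fun n : ℕ => √(n : ℝ)) atTop atTop :=
    tendsto_sqrt_atTop.comp tendsto_natCast_atTop_atTop
  refine (hsqrt.const_mul_atTop (div_pos hc (sqrt_pos.2 ha))).congr fun n => ?_
  rw [sqrt_div' a (Nat.cast_nonneg n), div_div_eq_mul_div, mul_div_right_comm]

theorem stmt10_general (θo σo h ψ : ℝ) (σ2 : NNReal) (hσo : 0 < σo)
    (hψ : 0 < ψ) (hψ1 : ψ ≤ 1) (hσ2 : 0 < σ2) :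
    ∀ M : ℝ, Tendsto (fun n : ℕ =>
        (gaussianReal 0 (σ2 / n)) {x |
          ψ * (nd x 0 ((σ2 : ℝ) / n) / nd x θo (σo ^ 2 + (σ2 : ℝ) / n))
            + (1 - ψ) * (nd x 0 (h * σo ^ 2 + (σ2 : ℝ) / n) /
                nd x θo (σo ^ 2 + (σ2 : ℝ) / n)) ≤ M})
      atTop (𝓝 0) := by
  intro M
  rw [ENNReal.tendsto_nhds_zero]
  intro ε hε
  obtain ⟨K, hK⟩ := (ENNReal.tendsto_nhds_zero.1 (tendsto_measure_setOf_natCast_lt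
    (gaussianReal 0 1) (measurable_id.pow_const 2)) ε hε).exists
  have hdiverge := tendsto_div_sqrt_div_natCast_atTop
    (c := ψ * √(2 * π * σo ^ 2) * exp (-(K : ℝ) / 2)) (a := 2 * π * σ2)
    (by positivity) (by positivity)
  filter_upwards [eventually_ne_atTop 0, hdiverge.eventually_gt_atTop M] with n hn hM
  have hv : (σ2 / n : NNReal) ≠ 0 := by positivity
  calc _ ≤ gaussianReal 0 (σ2 / n) {x | K * ((σ2 / n : NNReal) : ℝ) < x ^ 2} := by
        refine measure_mono ?_
        push_cast
        exact setOf_mixture_le_subset_setOf_lt_sq (by positivity) (by positivity) hψ.le hψ1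
          (by rwa [mul_div_assoc (2 * π)] at hM)
    _ = gaussianReal 0 1 {x | K < x ^ 2} := gaussianReal_zero_setOf_mul_lt_sq hv K
    _ ≤ ε := hK

theorem stmt10 (θo σo h ψ : ℝ) (σ2 : NNReal) (hθo : θo ≠ 0) (hσo : 0 < σo) (hh : 0 < h)
    (hψ : 0 < ψ) (hψ1 : ψ ≤ 1) (hσ2 : 0 < σ2) :
    ∀ M : ℝ, Tendsto (fun n : ℕ =>
        (gaussianReal 0 (σ2 / n)) {x |
          ψ * (nd x 0 ((σ2 : ℝ) / n) / nd x θo (σo ^ 2 + (σ2 : ℝ) / n))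
            + (1 - ψ) * (nd x 0 (h * σo ^ 2 + (σ2 : ℝ) / n) /
                nd x θo (σo ^ 2 + (σ2 : ℝ) / n)) ≤ M})
      atTop (𝓝 0) :=
  stmt10_general θo σo h ψ σ2 hσo hψ hψ1 hσ2
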